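/- arXiv:1311.1459 — 2 statements merged into one kernel-verified Lean document; each statement's English description precedes it below -/
import Mathlib

section
/- Let p₁ > 0, q ≥ 2 an even integer, c > 0, a ≠ 0, and let D = {v ∈ ℝ³ : v₁ > 0, v₃ > 0, v₁^{q-1} v₃ > c v₂^q}. Then for all α, β ≥ 0 with β + (α+1)/q ≤ 2, the integral ∫_D v₁^{p₁} |v₂/v₁|^α |v₃/v₁|^β e^{-v₁²/2} e^{-|a| v₃} dv is finite. -/
open Real MeasureTheory Set

/-!
Integrate out `v₂` first. For `v₁, v₃ > 0` the constraint `c v₂^q < v₁^{q-1} v₃` (with `q` even)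
confines `v₂` to `|v₂| < R = (v₁^{q-1} v₃ / c)^{1/q}`, where `|v₂ / v₁|^α ≤ (R / v₁)^α`. Hence the
`v₂`-integral is at most `2 R^{α+1} v₁^{p₁-α-β} v₃^β e^{-v₁²/2} e^{-A v₃}`, and with
`u = (α+1)/q` this equals `2 c^{-u} v₁^{p₁+1-β-u} e^{-v₁²/2} · v₃^{β+u} e^{-A v₃}`: a product of
a Gaussian moment and a Gamma integrand, both integrable on `(0, ∞)` because
`β + u ≤ 2 < p₁ + 2` and `β + u > 0`.
-/

section Domination

variable {X Y E : Type*} [MeasurableSpace X] [MeasurableSpace Y] [NormedAddCommGroup E]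
  {μ : Measure X} {ν : Measure Y}

theorem integrable_prod_of_integral_norm_le [SFinite μ] [SFinite ν] {F : X × Y → E}
    {G : Y → ℝ} (hF : AEStronglyMeasurable F (μ.prod ν)) (hG : Integrable G ν)
    (h : ∀ᵐ b ∂ν, Integrable (fun a => F (a, b)) μ ∧ ∫ a, ‖F (a, b)‖ ∂μ ≤ G b) :
    Integrable F (μ.prod ν) := by
  refine (integrable_prod_iff' hF).2 ⟨h.mono fun _ hb => hb.1,
    hG.mono' hF.prod_swap.norm.integral_prod_right' ?_⟩
  filter_upwards [h] with b hb
  rw [Real.norm_of_nonneg (integral_nonneg fun _ => norm_nonneg _)]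
  exact hb.2

theorem integrable_and_integral_norm_le_of_norm_le_indicator_Ioo {f : ℝ → E}
    (hf : AEStronglyMeasurable f) {r C : ℝ} (hr : 0 ≤ r)
    (h : ∀ y, ‖f y‖ ≤ (Ioo (-r) r).indicator (fun _ => C) y) :
    Integrable f ∧ ∫ y, ‖f y‖ ≤ 2 * r * C := by
  have hint : Integrable ((Ioo (-r) r).indicator fun _ => C) :=
    (integrable_indicator_iff measurableSet_Ioo).2 (integrableOn_const measure_Ioo_lt_top.ne)
  refine ⟨hint.mono' hf (.of_forall h), ?_⟩
  calc ∫ y, ‖f y‖ ≤ ∫ y, (Ioo (-r) r).indicator (fun _ => C) y :=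
        integral_mono_of_nonneg (.of_forall fun _ => norm_nonneg _) hint (.of_forall h)
    _ = 2 * r * C := by
        rw [integral_indicator_const _ measurableSet_Ioo, measureReal_def, Real.volume_Ioo,
          ENNReal.toReal_ofReal (by linarith), smul_eq_mul]
        ring

end Domination

theorem MeasureTheory.Integrable.mul_comp_finTwoArrow {α L : Type*} [MeasureSpace α]
    [SigmaFinite (volume : Measure α)] [NormedRing L] {f g : α → L} (hf : Integrable f)
    (hg : Integrable g) : Integrable fun w : Fin 2 → α => f (w 0) * g (w 1) :=
  ((volume_preserving_finTwoArrow α).integrable_comp_emb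
    (MeasurableEquiv.measurableEmbedding _)).2 (hf.mul_prod hg)

theorem integrable_indicator_Ioi_rpow_mul_exp_neg_sq_div_two {s : ℝ} (hs : -1 < s) :
    Integrable ((Ioi 0).indicator fun x : ℝ => x ^ s * exp (-x ^ 2 / 2)) :=
  (integrable_indicator_iff measurableSet_Ioi).2 <|
    (integrableOn_rpow_mul_exp_neg_mul_sq (by norm_num : (0 : ℝ) < 1 / 2) hs).congr_fun
      (fun x _ => by ring_nf) measurableSet_Ioi

theorem integrable_indicator_Ioi_rpow_mul_exp_neg_mul {s b : ℝ} (hs : -1 < s) (hb : 0 < b) :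
    Integrable ((Ioi 0).indicator fun x : ℝ => x ^ s * exp (-b * x)) :=
  (integrable_indicator_iff measurableSet_Ioi).2 <| by
    simpa only [rpow_one] using integrableOn_rpow_mul_exp_neg_mul_rpow hs one_pos hb

theorem abs_lt_rpow_inv_of_mul_pow_lt {q : ℕ} (hq : q ≠ 0) (hq_even : Even q) {c y M : ℝ}
    (hc : 0 < c) (h : c * y ^ q < M) : |y| < (M / c) ^ (q⁻¹ : ℝ) := by
  have hM : 0 < M := (mul_nonneg hc.le (hq_even.pow_nonneg y)).trans_lt h
  rw [lt_rpow_inv_iff_of_pos (abs_nonneg y) (div_pos hM hc).le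
      (Nat.cast_pos.2 (Nat.pos_of_ne_zero hq)),
    Real.rpow_natCast, hq_even.pow_abs, lt_div_iff₀ hc, mul_comm]
  exact h

theorem pow_pred_mul_div_rpow_inv_rpow {q : ℕ} (hq : q ≠ 0) {c x z : ℝ} (hc : 0 < c) (hx : 0 < x)
    (hz : 0 < z) (γ : ℝ) :
    ((x ^ (q - 1) * z / c) ^ (q⁻¹ : ℝ)) ^ γ = c ^ (-(γ / q)) * x ^ (γ - γ / q) * z ^ (γ / q) := by
  have hq' : (q : ℝ) ≠ 0 := Nat.cast_ne_zero.2 hq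
  rw [← rpow_mul (by positivity), div_rpow (by positivity) hc.le, mul_rpow (by positivity) hz.le,
    ← rpow_natCast, ← rpow_mul hx.le, Nat.cast_sub (Nat.one_le_iff_ne_zero.2 hq), rpow_neg hc.le,
    Nat.cast_one]
  field_simp

section Slice

variable {q : ℕ} (hq : q ≠ 0) (hq_even : Even q) {c p₁ α β A : ℝ} (hc : 0 < c) (hα : 0 ≤ α)
include hq hq_even hc hα

theorem integrable_and_integral_norm_slice_le_of_pos {x z : ℝ} (hx : 0 < x) (hz : 0 < z) :
    let f := {y : ℝ | c * y ^ q < x ^ (q - 1) * z}.indicator fun y =>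
      x ^ p₁ * |y / x| ^ α * |z / x| ^ β * exp (-x ^ 2 / 2) * exp (-A * z)
    Integrable f ∧ ∫ y, ‖f y‖ ≤ 2 * c ^ (-((α + 1) / q)) *
      (x ^ (p₁ + 1 - β - (α + 1) / q) * exp (-x ^ 2 / 2)) *
      (z ^ (β + (α + 1) / q) * exp (-A * z)) := by
  intro f
  set R := (x ^ (q - 1) * z / c) ^ (q⁻¹ : ℝ)
  have hR : 0 < R := by positivity
  set C := x ^ (p₁ - α - β) * z ^ β * R ^ α * exp (-x ^ 2 / 2) * exp (-A * z)
  have hbound : ∀ y, ‖f y‖ ≤ (Ioo (-R) R).indicator (fun _ => C) y := by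
    intro y
    simp only [f]
    by_cases hy : c * y ^ q < x ^ (q - 1) * z
    · have hyR := abs_lt_rpow_inv_of_mul_pow_lt hq hq_even hc hy
      have hsplit : x ^ p₁ * |y / x| ^ α * |z / x| ^ β = x ^ (p₁ - α - β) * z ^ β * |y| ^ α := by
        rw [abs_div, abs_div, abs_of_pos hx, abs_of_pos hz, div_rpow (abs_nonneg y) hx.le,
          div_rpow hz.le hx.le, rpow_sub hx, rpow_sub hx]
        field_simp
      rw [indicator_of_mem (show y ∈ {y : ℝ | c * y ^ q < x ^ (q - 1) * z} from hy),
        indicator_of_mem (mem_Ioo.2 (abs_lt.1 hyR)), Real.norm_of_nonneg (by positivity), hsplit]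
      simp only [C]
      gcongr
    · rw [indicator_of_notMem (show y ∉ {y : ℝ | c * y ^ q < x ^ (q - 1) * z} from hy),
        norm_zero]
      exact indicator_nonneg (fun _ _ => by positivity) y
  have hmeas : AEStronglyMeasurable f :=
    (Measurable.indicator (by fun_prop)
      (measurableSet_lt (by fun_prop) (by fun_prop))).aestronglyMeasurable
  refine (integrable_and_integral_norm_le_of_norm_le_indicator_Ioo hmeas hR.le hbound).imp_right
    fun h => h.trans_eq ?_
  calc 2 * R * C = 2 * (x ^ (p₁ - α - β) * z ^ β * R ^ (α + 1)) * exp (-x ^ 2 / 2) *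
        exp (-A * z) := by
        rw [rpow_add hR, rpow_one]
        ring
    _ = _ := by
        rw [pow_pred_mul_div_rpow_inv_rpow hq hc hx hz, rpow_add hz,
          show p₁ + 1 - β - (α + 1) / q = (p₁ - α - β) + (α + 1 - (α + 1) / q) by ring,
          rpow_add hx]
        ring

theorem integrable_and_integral_norm_slice_le (x z : ℝ) :
    let f := {y : ℝ | 0 < x ∧ 0 < z ∧ c * y ^ q < x ^ (q - 1) * z}.indicator fun y =>
      x ^ p₁ * |y / x| ^ α * |z / x| ^ β * exp (-x ^ 2 / 2) * exp (-A * z)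
    Integrable f ∧ ∫ y, ‖f y‖ ≤ 2 * c ^ (-((α + 1) / q)) *
      ((Ioi 0).indicator (fun x => x ^ (p₁ + 1 - β - (α + 1) / q) * exp (-x ^ 2 / 2)) x *
        (Ioi 0).indicator (fun z => z ^ (β + (α + 1) / q) * exp (-A * z)) z) := by
  intro f
  by_cases hxz : 0 < x ∧ 0 < z
  · simp only [f, hxz, true_and, indicator_of_mem (mem_Ioi.2 hxz.1),
      indicator_of_mem (mem_Ioi.2 hxz.2)]
    exact (integrable_and_integral_norm_slice_le_of_pos (p₁ := p₁) (β := β) (A := A) hq hq_even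
      hc hα hxz.1 hxz.2).imp_right fun h => h.trans_eq (by ring)
  · have hf : f = 0 := funext fun y => indicator_of_notMem (fun hy => hxz ⟨hy.1, hy.2.1⟩) _
    simp only [hf, Pi.zero_apply, norm_zero, integral_zero]
    refine ⟨integrable_zero _ _ _, mul_nonneg (by positivity) (mul_nonneg ?_ ?_)⟩ <;>
      exact indicator_nonneg
        (fun t ht => mul_nonneg (rpow_nonneg (le_of_lt ht) _) (exp_pos _).le) _

end Slice

/-- With `p₁ > 0`, `q ≥ 2` even, `c > 0`, `A = |a| > 0`, and
`D = {v ∈ ℝ³ : v₁ > 0, v₃ > 0, v₁^{q-1} v₃ > c v₂^q}`, for all `α, β ≥ 0` with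
`β + (α+1)/q ≤ 2` the integral
`∫_D v₁^{p₁} |v₂/v₁|^α |v₃/v₁|^β e^{-v₁²/2} e^{-A v₃} dv` is finite. -/
theorem integrable_on_limit_domain
    (p₁ : ℝ) (hp₁ : 0 < p₁) (q : ℕ) (hq : 2 ≤ q) (hq_even : Even q)
    (c A : ℝ) (hc : 0 < c) (hA : 0 < A)
    (α β : ℝ) (hα : 0 ≤ α) (hβ : 0 ≤ β) (hαβ : β + (α + 1) / q ≤ 2) :
    IntegrableOn
      (fun v : Fin 3 → ℝ =>
        v 0 ^ p₁ * |v 1 / v 0| ^ α * |v 2 / v 0| ^ β *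
          Real.exp (-(v 0) ^ 2 / 2) * Real.exp (-A * v 2))
      {v : Fin 3 → ℝ | 0 < v 0 ∧ 0 < v 2 ∧ c * v 1 ^ q < v 0 ^ (q - 1) * v 2}
      volume := by
  have hq0 : q ≠ 0 := by omega
  have hu : 0 < (α + 1) / q := by positivity
  have hD : MeasurableSet
      {v : Fin 3 → ℝ | 0 < v 0 ∧ 0 < v 2 ∧ c * v 1 ^ q < v 0 ^ (q - 1) * v 2} := by
    measurability
  rw [← integrable_indicator_iff hD,
    ← (volume_preserving_piFinSuccAbove (fun _ : Fin 3 => ℝ) 1).symm.integrable_comp_emb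
      (MeasurableEquiv.measurableEmbedding _)]
  refine integrable_prod_of_integral_norm_le ?_
    (((integrable_indicator_Ioi_rpow_mul_exp_neg_sq_div_two (by linarith)).mul_comp_finTwoArrow
      (integrable_indicator_Ioi_rpow_mul_exp_neg_mul (by linarith) hA)).const_mul _)
    -- through `Fin.insertNth 1`, the section at `w` is definitionally the slice at `(w 0, w 1)`
    (.of_forall fun w => integrable_and_integral_norm_slice_le hq0 hq_even hc hα (w 0) (w 1))
  exact ((Measurable.indicator (by fun_prop) hD).comp
    (MeasurableEquiv.measurable _)).aestronglyMeasurable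
end

section
/- Let p₁ > 0, M > 0, η > 0, and a ∈ ℝ^d nonzero. Then ∫_{ℝ^d} |z|^{p₁} e^{-η√t |a| |z|} dz = O(t^{-(p₁+d)/2}) as t → ∞; in particular, for any measurable u with |u(z)| ≤ M|z|^{p₁}, the integral ∫_{{z ∈ C : z_d > η|z|}} u(z) e^{-|z|²/2} e^{-√t |a| z_d} dz over a cone C ⊆ ℝ^d is o(t^{-d/2}) as t → ∞. -/
/-!
On the cap `z_d > η‖z‖` the Gaussian factor is at most `1` and
`e^{-√t ‖a‖ z_d} ≤ e^{-η √t ‖a‖ ‖z‖}`, so the cap integral is bounded by `M` times the radial integral `∫ ‖z‖^{p₁} e^{-η √t ‖a‖ ‖z‖} dz`.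
The substitution `z ↦ z / (η ‖a‖ √t)` shows that this radial integral equals a constant times
`t^{-(p₁+d)/2}`, which is `o(t^{-d/2})` because `p₁ > 0`.
-/

open Real MeasureTheory Filter Asymptotics

theorem isLittleO_rpow_rpow_atTop {r s : ℝ} (hrs : r < s) :
    (fun t : ℝ => t ^ r) =o[atTop] fun t => t ^ s := by
  have hquot : (fun t : ℝ => t ^ (-(s - r))) =ᶠ[atTop] fun t => t ^ r / t ^ s := by
    filter_upwards [eventually_gt_atTop 0] with t ht
    rw [← rpow_sub ht]
    ring_nf
  refine (isLittleO_iff_tendsto' ?_).2 ((tendsto_rpow_neg_atTop (by linarith)).congr' hquot)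
  filter_upwards [eventually_gt_atTop 0] with t ht h
  exact absurd h (rpow_pos_of_pos ht s).ne'

section NormedSpace

variable {E : Type*} [NormedAddCommGroup E] [NormedSpace ℝ E] [FiniteDimensional ℝ E]
  [MeasurableSpace E] [BorelSpace E] (μ : Measure E) [μ.IsAddHaarMeasure]

theorem integrable_norm_rpow_mul_exp_neg_mul_norm [Nontrivial E] {p b : ℝ}
    (hp : -(Module.finrank ℝ E : ℝ) < p) (hb : 0 < b) :
    Integrable (fun z : E => ‖z‖ ^ p * exp (-(b * ‖z‖))) μ := by
  have hdim : 1 ≤ Module.finrank ℝ E := Module.finrank_pos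
  rw [integrable_fun_norm_addHaar μ (f := fun r => r ^ p * exp (-(b * r)))]
  refine (integrableOn_rpow_mul_exp_neg_mul_rpow (s := (Module.finrank ℝ E - 1 : ℝ) + p)
    (by linarith) one_pos hb).congr_fun (fun y (hy : 0 < y) => ?_) measurableSet_Ioi
  simp only [rpow_one, smul_eq_mul]
  rw [rpow_add hy, ← rpow_natCast, Nat.cast_sub hdim, neg_mul]
  push_cast
  ring

theorem integral_norm_rpow_mul_exp_neg_mul_norm (p : ℝ) {b : ℝ} (hb : 0 < b) :
    ∫ z, ‖z‖ ^ p * exp (-(b * ‖z‖)) ∂μ =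
      b ^ (-(p + Module.finrank ℝ E)) * ∫ z, ‖z‖ ^ p * exp (-‖z‖) ∂μ := by
  have hscale :=
    μ.integral_comp_smul_of_nonneg (fun z : E => ‖z‖ ^ p * exp (-‖z‖)) b (hR := hb.le)
  simp only [norm_smul, norm_of_nonneg hb.le, mul_rpow hb.le (norm_nonneg _), mul_assoc,
    integral_const_mul, smul_eq_mul] at hscale
  rw [rpow_neg hb.le, rpow_add hb, rpow_natCast, mul_inv, mul_assoc, ← hscale]
  field_simp

theorem isBigO_integral_norm_rpow_mul_exp_neg_mul_sqrt_atTop (p : ℝ) {c : ℝ} (hc : 0 < c) :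
    (fun t : ℝ => ∫ z, ‖z‖ ^ p * exp (-(c * √t * ‖z‖)) ∂μ) =O[atTop]
      fun t => t ^ (-(p + Module.finrank ℝ E) / 2) := by
  refine (isBigO_const_mul_self
    (c ^ (-(p + Module.finrank ℝ E)) * ∫ z, ‖z‖ ^ p * exp (-‖z‖) ∂μ) _ _).congr' ?_ .rfl
  filter_upwards [eventually_gt_atTop 0] with t ht
  rw [integral_norm_rpow_mul_exp_neg_mul_norm μ p (by positivity), mul_rpow hc.le (sqrt_nonneg t),
    sqrt_eq_rpow, ← rpow_mul ht.le]
  ring_nf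

end NormedSpace

theorem norm_setIntegral_cap_le {E : Type*} [NormedAddCommGroup E] [MeasurableSpace E]
    {μ : Measure E} {S : Set E} (hS : MeasurableSet S) {ℓ : E → ℝ} {η : ℝ}
    (hℓ : ∀ z ∈ S, η * ‖z‖ ≤ ℓ z) {u : E → ℝ} {M p : ℝ} (hu : ∀ z, |u z| ≤ M * ‖z‖ ^ p)
    {s : ℝ} (hs : 0 ≤ s) (hint : Integrable (fun z => ‖z‖ ^ p * exp (-(η * s * ‖z‖))) μ) :
    ‖∫ z in S, u z * exp (-‖z‖ ^ 2 / 2) * exp (-s * ℓ z) ∂μ‖ ≤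
      M * ∫ z, ‖z‖ ^ p * exp (-(η * s * ‖z‖)) ∂μ := by
  have hbound : ∀ z ∈ S, ‖u z * exp (-‖z‖ ^ 2 / 2) * exp (-s * ℓ z)‖ ≤
      M * (‖z‖ ^ p * exp (-(η * s * ‖z‖))) := by
    intro z hz
    have hgauss : exp (-‖z‖ ^ 2 / 2) ≤ 1 := exp_le_one_iff.2 (by nlinarith [sq_nonneg ‖z‖])
    have hcap : exp (-s * ℓ z) ≤ exp (-(η * s * ‖z‖)) :=
      exp_le_exp.2 (by nlinarith [mul_le_mul_of_nonneg_left (hℓ z hz) hs])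
    rw [norm_mul, norm_mul, norm_of_nonneg (exp_pos _).le, norm_of_nonneg (exp_pos _).le,
      Real.norm_eq_abs, ← mul_assoc]
    have hM : 0 ≤ M * ‖z‖ ^ p := (abs_nonneg _).trans (hu z)
    calc |u z| * exp (-‖z‖ ^ 2 / 2) * exp (-s * ℓ z)
        ≤ M * ‖z‖ ^ p * 1 * exp (-(η * s * ‖z‖)) :=
          mul_le_mul (mul_le_mul (hu z) hgauss (exp_pos _).le hM) hcap (exp_pos _).le (by simpa)
      _ = M * ‖z‖ ^ p * exp (-(η * s * ‖z‖)) := by rw [mul_one]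
  have hnonneg : ∀ z, 0 ≤ M * (‖z‖ ^ p * exp (-(η * s * ‖z‖))) := fun z => by
    rw [← mul_assoc]; exact mul_nonneg ((abs_nonneg _).trans (hu z)) (exp_pos _).le
  calc ‖∫ z in S, u z * exp (-‖z‖ ^ 2 / 2) * exp (-s * ℓ z) ∂μ‖
      ≤ ∫ z in S, M * (‖z‖ ^ p * exp (-(η * s * ‖z‖))) ∂μ :=
        norm_integral_le_of_norm_le (hint.const_mul M).integrableOn
          ((ae_restrict_iff' hS).2 (ae_of_all _ hbound))
    _ ≤ ∫ z, M * (‖z‖ ^ p * exp (-(η * s * ‖z‖))) ∂μ :=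
        setIntegral_le_integral (hint.const_mul M) (ae_of_all _ hnonneg)
    _ = M * ∫ z, ‖z‖ ^ p * exp (-(η * s * ‖z‖)) ∂μ := integral_const_mul _ _

/-- For `p₁ > 0`, `η > 0` and `a ≠ 0`,
`∫_{ℝ^d} |z|^{p₁} e^{-η√t |a| |z|} dz = O(t^{-(p₁+d)/2})` as `t → ∞`; in particular,
for any measurable `u` with `|u(z)| ≤ M|z|^{p₁}` and any measurable cone `C ⊆ ℝ^d`,
`∫_{{z ∈ C : z_d > η|z|}} u(z) e^{-|z|²/2} e^{-√t |a| z_d} dz = o(t^{-d/2})`. -/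
theorem spherical_cap_contribution
    (d : ℕ) (hd : 0 < d) (p₁ M η : ℝ) (hp₁ : 0 < p₁) (hη : 0 < η)
    (a : EuclideanSpace ℝ (Fin d)) (ha : a ≠ 0)
    (C : Set (EuclideanSpace ℝ (Fin d))) (hC_meas : MeasurableSet C)
    (u : EuclideanSpace ℝ (Fin d) → ℝ)
    (hu_bound : ∀ z, |u z| ≤ M * ‖z‖ ^ p₁) :
    ((fun t : ℝ =>
        ∫ z : EuclideanSpace ℝ (Fin d),
          ‖z‖ ^ p₁ * Real.exp (-η * Real.sqrt t * ‖a‖ * ‖z‖)) =O[atTop]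
      fun t : ℝ => t ^ (-(p₁ + d) / 2)) ∧
    ((fun t : ℝ =>
        ∫ z in {z ∈ C | η * ‖z‖ < z ⟨d - 1, by omega⟩},
          u z * Real.exp (-‖z‖ ^ 2 / 2) *
            Real.exp (-Real.sqrt t * ‖a‖ * z ⟨d - 1, by omega⟩)) =o[atTop]
      fun t : ℝ => t ^ (-(d : ℝ) / 2)) := by
  have : Nonempty (Fin d) := ⟨⟨0, hd⟩⟩
  have hc : 0 < η * ‖a‖ := mul_pos hη (norm_pos_iff.2 ha)
  have hfull := isBigO_integral_norm_rpow_mul_exp_neg_mul_sqrt_atTop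
    (volume : Measure (EuclideanSpace ℝ (Fin d))) p₁ hc
  rw [finrank_euclideanSpace_fin] at hfull
  have hexp : ∀ t : ℝ, ∀ x, -η * √t * ‖a‖ * x = -(η * ‖a‖ * √t * x) := fun _ _ => by ring
  simp only [hexp]
  refine ⟨hfull, IsBigO.trans_isLittleO ?_
    (isLittleO_rpow_rpow_atTop (r := -(p₁ + d) / 2) (by linarith))⟩
  refine IsBigO.trans (IsBigO.of_bound M ?_) hfull
  filter_upwards [eventually_gt_atTop 0] with t ht
  have hcap := norm_setIntegral_cap_le (μ := volume)
    (S := {z ∈ C | η * ‖z‖ < z ⟨d - 1, by omega⟩}) (ℓ := fun z => z ⟨d - 1, by omega⟩)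
    (hC_meas.inter (measurableSet_lt (by fun_prop)
      (EuclideanSpace.proj (𝕜 := ℝ) (⟨d - 1, by omega⟩ : Fin d)).continuous.measurable))
    (fun z hz => hz.2.le) hu_bound (s := ‖a‖ * √t) (by positivity)
    (integrable_norm_rpow_mul_exp_neg_mul_norm _
      (by rw [finrank_euclideanSpace_fin]; linarith) (by positivity))
  have hfull_nonneg :
      0 ≤ ∫ z : EuclideanSpace ℝ (Fin d), ‖z‖ ^ p₁ * exp (-(η * ‖a‖ * √t * ‖z‖)) :=
    integral_nonneg fun z => by positivity
  rw [norm_of_nonneg hfull_nonneg]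
  convert hcap using 6 <;> ring
end
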